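/- arXiv:1910.09002 — 2 statements merged into one kernel-verified Lean document; each statement's English description precedes it below -/
import Mathlib

section
/- Let (G, p) be a finite critical net in ℝ^k satisfying the balance condition, and let v ∈ EuclideanSpace ℝ (Fin k). Then the total entering current equals the total exiting current: ∑_{l ∈ ∂X with ⟪u_l, v⟫ > 0} ⟪u_l, v⟫ = − ∑_{l ∈ ∂X with ⟪u_l, v⟫ < 0} ⟪u_l, v⟫, and both are equal to (1/2) ∑_{l ∈ ∂X} |⟪u_l, v⟫|. -/
open scoped RealInnerProductSpace

/-! The unit vector `u x y` from `p y` to `p x` is antisymmetric in `x, y`, so summed over all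
oriented edges it gives zero. Grouping that sum by the tail vertex, the interior vertices
contribute nothing by the balance condition (isolated vertices contribute an empty sum), and a
leaf `l` contributes exactly its leaf vector `u l (n l)`: hence the leaf vectors sum to zero.
Pairing with `v`, the leaf currents sum to zero, so their positive and negative parts have the
same size, each half of the sum of absolute values. -/

namespace SimpleGraph

variable {V M : Type*} [Fintype V] (G : SimpleGraph V) [DecidableRel G.Adj] [AddCommGroup M]

theorem sum_sum_neighborFinset_eq_zero_of_antisymm (F : V → V → M)
    (hF : ∀ x y, G.Adj x y → F y x = -F x y) :
    ∑ x, ∑ y ∈ G.neighborFinset x, F x y = 0 := by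
  simp_rw [neighborFinset_eq_filter, Finset.sum_filter]
  rw [← Fintype.sum_prod_type' (fun x y => if G.Adj x y then F x y else 0)]
  refine Finset.sum_ninvolution Prod.swap (fun q => ?_) (fun q hq => ?_)
    (fun _ => Finset.mem_univ _) Prod.swap_swap
  · by_cases h : G.Adj q.1 q.2
    · simp [h, h.symm, hF _ _ h]
    · simp [h, mt G.adj_symm h]
  · have h : G.Adj q.1 q.2 := by by_contra h; simp [h] at hq
    intro hswap
    exact G.ne_of_adj h (congrArg Prod.fst hswap).symm

theorem neighborFinset_eq_singleton_of_degree_eq_one {l m : V} (hl : G.degree l = 1)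
    (hm : G.Adj l m) : G.neighborFinset l = {m} := by
  refine (Finset.eq_of_subset_of_card_le ?_ ?_).symm
  · exact Finset.singleton_subset_iff.2 ((G.mem_neighborFinset l m).2 hm)
  · rw [G.card_neighborFinset_eq_degree, hl, Finset.card_singleton]

theorem sum_leaves_eq_zero_of_balanced (F : V → V → M)
    (hF : ∀ x y, G.Adj x y → F y x = -F x y)
    (hbal : ∀ x, 2 ≤ G.degree x → ∑ y ∈ G.neighborFinset x, F x y = 0)
    (n : V → V) (hn : ∀ l, G.degree l = 1 → G.Adj l (n l)) :
    ∑ l with G.degree l = 1, F l (n l) = 0 := by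
  have hleaf : ∀ l ∈ ({l | G.degree l = 1} : Finset V),
      ∑ y ∈ G.neighborFinset l, F l y = F l (n l) := by
    intro l hl
    have hl : G.degree l = 1 := (Finset.mem_filter.1 hl).2
    rw [G.neighborFinset_eq_singleton_of_degree_eq_one hl (hn l hl), Finset.sum_singleton]
  have hinterior : ∀ x ∈ ({x | ¬G.degree x = 1} : Finset V),
      ∑ y ∈ G.neighborFinset x, F x y = 0 := by
    intro x hx
    have hx : G.degree x ≠ 1 := (Finset.mem_filter.1 hx).2
    rcases Nat.lt_or_ge (G.degree x) 2 with hlt | hge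
    · have hisolated : G.neighborFinset x = ∅ :=
        Finset.card_eq_zero.1 (by rw [G.card_neighborFinset_eq_degree]; omega)
      rw [hisolated, Finset.sum_empty]
    · exact hbal x hge
  calc ∑ l with G.degree l = 1, F l (n l)
      = ∑ x with G.degree x = 1, ∑ y ∈ G.neighborFinset x, F x y
        + ∑ x with ¬G.degree x = 1, ∑ y ∈ G.neighborFinset x, F x y := by
        rw [Finset.sum_congr rfl hleaf, Finset.sum_congr rfl hinterior, Finset.sum_const_zero,
          add_zero]
    _ = ∑ x, ∑ y ∈ G.neighborFinset x, F x y := Finset.sum_filter_add_sum_filter_not _ _ _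
    _ = 0 := G.sum_sum_neighborFinset_eq_zero_of_antisymm F hF

end SimpleGraph
namespace Finset

variable {ι α : Type*} {s : Finset ι} {f : ι → α}

theorem sum_filter_pos_eq_neg_sum_filter_neg [AddCommGroup α] [LinearOrder α]
    [IsOrderedAddMonoid α] (h : ∑ i ∈ s, f i = 0) :
    ∑ i ∈ s with 0 < f i, f i = -∑ i ∈ s with f i < 0, f i := by
  rw [eq_neg_iff_add_eq_zero, sum_filter, sum_filter, ← sum_add_distrib]
  refine (sum_congr rfl fun i _ => ?_).trans h
  split_ifs with hpos hneg hneg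
  · exact absurd hpos (lt_asymm hneg)
  · exact add_zero _
  · exact zero_add _
  · rw [add_zero, le_antisymm (not_lt.1 hpos) (not_lt.1 hneg)]

theorem sum_filter_pos_eq_half_sum_abs [Field α] [LinearOrder α] [IsStrictOrderedRing α]
    (h : ∑ i ∈ s, f i = 0) :
    ∑ i ∈ s with 0 < f i, f i = 1 / 2 * ∑ i ∈ s, |f i| := by
  calc ∑ i ∈ s with 0 < f i, f i
      = 1 / 2 * (2 * ∑ i ∈ s, (if 0 < f i then f i else 0) - ∑ i ∈ s, f i) := by
        rw [h, sum_filter]; ring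
    _ = 1 / 2 * ∑ i ∈ s, |f i| := by
        rw [mul_sum, ← sum_sub_distrib]
        congr 1
        refine sum_congr rfl fun i _ => ?_
        split_ifs with hpos
        · rw [abs_of_pos hpos]; ring
        · rw [abs_of_nonpos (not_lt.1 hpos)]; ring

end Finset

theorem entering_current_eq_exiting_current_general
    {k : ℕ} {V : Type*} [Fintype V]
    (G : SimpleGraph V) [DecidableRel G.Adj]
    (p : V → EuclideanSpace ℝ (Fin k))
    (hbal : ∀ x : V, 2 ≤ G.degree x →
      ∑ y ∈ G.neighborFinset x, (‖p x - p y‖)⁻¹ • (p x - p y) = 0)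
    (n : V → V) (hn : ∀ l : V, G.degree l = 1 → G.Adj l (n l))
    (v : EuclideanSpace ℝ (Fin k)) :
    (∑ l ∈ (Finset.univ.filter fun l : V => G.degree l = 1).filter
        (fun l => 0 < ⟪(‖p l - p (n l)‖)⁻¹ • (p l - p (n l)), v⟫),
        ⟪(‖p l - p (n l)‖)⁻¹ • (p l - p (n l)), v⟫
      = - ∑ l ∈ (Finset.univ.filter fun l : V => G.degree l = 1).filter
          (fun l => ⟪(‖p l - p (n l)‖)⁻¹ • (p l - p (n l)), v⟫ < 0),
          ⟪(‖p l - p (n l)‖)⁻¹ • (p l - p (n l)), v⟫)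
    ∧ (∑ l ∈ (Finset.univ.filter fun l : V => G.degree l = 1).filter
        (fun l => 0 < ⟪(‖p l - p (n l)‖)⁻¹ • (p l - p (n l)), v⟫),
        ⟪(‖p l - p (n l)‖)⁻¹ • (p l - p (n l)), v⟫
      = (1 / 2 : ℝ) * ∑ l ∈ Finset.univ.filter (fun l : V => G.degree l = 1),
          |⟪(‖p l - p (n l)‖)⁻¹ • (p l - p (n l)), v⟫|) := by
  set u : V → V → EuclideanSpace ℝ (Fin k) := fun x y => ‖p x - p y‖⁻¹ • (p x - p y)
  have hu : ∀ x y, G.Adj x y → u y x = -u x y := fun x y _ => by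
    simp only [u]; rw [norm_sub_rev, ← smul_neg, neg_sub]
  have hcurrents : ∑ l with G.degree l = 1, ⟪u l (n l), v⟫ = 0 := by
    rw [← sum_inner, G.sum_leaves_eq_zero_of_balanced u hu hbal n hn, inner_zero_left]
  exact ⟨Finset.sum_filter_pos_eq_neg_sum_filter_neg hcurrents,
    Finset.sum_filter_pos_eq_half_sum_abs hcurrents⟩

/-- In a finite critical net in `ℝ^k` satisfying the balance
condition, for every direction `v` the total current entering at the leaves equals the
total current exiting at the leaves, and both equal half the sum of the absolute values
of the leaf currents. -/
theorem entering_current_eq_exiting_current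
    {k : ℕ} (hk : 1 ≤ k) {V : Type*} [Fintype V] [DecidableEq V]
    (G : SimpleGraph V) [DecidableRel G.Adj]
    (p : V → EuclideanSpace ℝ (Fin k)) (hinj : Function.Injective p)
    (hdeg1 : ∀ x : V, 1 ≤ G.degree x)
    (hnoLL : ∀ x y : V, G.Adj x y → ¬(G.degree x = 1 ∧ G.degree y = 1))
    (hbal : ∀ x : V, 2 ≤ G.degree x →
      ∑ y ∈ G.neighborFinset x, (‖p x - p y‖)⁻¹ • (p x - p y) = 0)
    (n : V → V) (hn : ∀ l : V, G.degree l = 1 → G.Adj l (n l))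
    (v : EuclideanSpace ℝ (Fin k)) :
    (∑ l ∈ (Finset.univ.filter fun l : V => G.degree l = 1).filter
        (fun l => 0 < ⟪(‖p l - p (n l)‖)⁻¹ • (p l - p (n l)), v⟫),
        ⟪(‖p l - p (n l)‖)⁻¹ • (p l - p (n l)), v⟫
      = - ∑ l ∈ (Finset.univ.filter fun l : V => G.degree l = 1).filter
          (fun l => ⟪(‖p l - p (n l)‖)⁻¹ • (p l - p (n l)), v⟫ < 0),
          ⟪(‖p l - p (n l)‖)⁻¹ • (p l - p (n l)), v⟫)
    ∧ (∑ l ∈ (Finset.univ.filter fun l : V => G.degree l = 1).filter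
        (fun l => 0 < ⟪(‖p l - p (n l)‖)⁻¹ • (p l - p (n l)), v⟫),
        ⟪(‖p l - p (n l)‖)⁻¹ • (p l - p (n l)), v⟫
      = (1 / 2 : ℝ) * ∑ l ∈ Finset.univ.filter (fun l : V => G.degree l = 1),
          |⟪(‖p l - p (n l)‖)⁻¹ • (p l - p (n l)), v⟫|) :=
  entering_current_eq_exiting_current_general G p hbal n hn v
end

section
/- Let (G, p) be a finite critical net in ℝ^k satisfying the balance condition. Then the degree of every vertex is at most √k times the number of leaves: for every vertex x of G, deg_G(x) ≤ √k · |∂X|. -/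
/-!
Fix a linear functional `φ` and a vertex `x`, and let `T` be the set of vertices lying strictly
above `x` in `φ ∘ p`. In the sum of `φ` of the balance vectors over `T` the edges inside `T` cancel;
what remains is the flow of `φ` out of `T`, a sum of nonnegative terms among which `φ (e_{yx})⁺`
for each neighbour `y` of `x`, with `e_{yx}` the unit vector from `p x` to `p y`. Since only leaves
have a nonzero balance vector, `∑_y φ (e_{yx})⁺ ≤ ∑_l φ (F_l)⁺`, where `F_l` is the unit edge vector
at the leaf `l`. Taking `φ = ±` a coordinate gives `∑_y ‖e_{yx}‖₁ ≤ ∑_l ‖F_l‖₁`, and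
`1 ≤ ‖v‖₁ ≤ √k` for unit vectors `v` yields `deg x ≤ √k · #leaves`.
-/

open Finset
open scoped RealInnerProductSpace

theorem Finset.sum_sum_eq_zero_of_antisymm {ι : Type*} (s : Finset ι) {f : ι → ι → ℝ}
    (hf : ∀ i j, f j i = -f i j) : ∑ i ∈ s, ∑ j ∈ s, f i j = 0 := by
  have h : ∑ i ∈ s, ∑ j ∈ s, f i j = -∑ i ∈ s, ∑ j ∈ s, f i j := by
    conv_lhs => rw [sum_comm]
    rw [← sum_neg_distrib]
    exact sum_congr rfl fun i _ => by rw [← sum_neg_distrib]; exact sum_congr rfl fun j _ => hf i j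
  linarith

theorem Finset.sum_le_sum_posPart_of_eq_zero {ι : Type*} [Fintype ι] {f : ι → ℝ} {S : Finset ι}
    (hf : ∀ i ∉ S, f i = 0) (T : Finset ι) : ∑ i ∈ T, f i ≤ ∑ i ∈ S, (f i)⁺ :=
  calc ∑ i ∈ T, f i ≤ ∑ i ∈ T, (f i)⁺ := sum_le_sum fun i _ => le_posPart (f i)
    _ ≤ ∑ i, (f i)⁺ := sum_le_univ_sum_of_nonneg fun i => posPart_nonneg (f i)
    _ = ∑ i ∈ S, (f i)⁺ := (sum_subset (subset_univ S) fun i _ hi => by simp [hf i hi]).symm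

namespace SimpleGraph

variable {V : Type*} [Fintype V] (G : SimpleGraph V) [DecidableRel G.Adj]

theorem sum_sum_neighborFinset_eq_sum_sum_notMem [DecidableEq V] {h : V → V → ℝ}
    (hh : ∀ z w, h w z = -h z w) (T : Finset V) :
    ∑ z ∈ T, ∑ w ∈ G.neighborFinset z, h z w =
      ∑ z ∈ T, ∑ w ∈ G.neighborFinset z with w ∉ T, h z w := by
  have hinner : ∑ z ∈ T, ∑ w ∈ G.neighborFinset z with w ∈ T, h z w = 0 := by
    have hrow : ∀ z, ∑ w ∈ G.neighborFinset z with w ∈ T, h z w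
        = ∑ w ∈ T, if G.Adj z w then h z w else 0 := fun z => by
      rw [← sum_filter]; congr 1; ext w; simp [and_comm]
    simp only [hrow]
    refine T.sum_sum_eq_zero_of_antisymm fun z w => ?_
    by_cases hzw : G.Adj z w
    · rw [if_pos hzw, if_pos hzw.symm, hh]
    · rw [if_neg hzw, if_neg (mt G.adj_symm hzw), neg_zero]
  simp_rw [← sum_filter_add_sum_filter_not (G.neighborFinset _) (· ∈ T), sum_add_distrib, hinner,
    zero_add]

theorem sum_posPart_le_sum_filter_lt (g : V → ℝ) {c : V → V → ℝ} (hc : ∀ z w, c w z = c z w)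
    (hc₀ : ∀ z w, 0 ≤ c z w) (x : V) :
    ∑ y ∈ G.neighborFinset x, (c y x * (g y - g x))⁺ ≤
      ∑ z with g x < g z, ∑ w ∈ G.neighborFinset z, c z w * (g z - g w) := by
  classical
  set T : Finset V := {z | g x < g z}
  have hT : ∀ z, z ∈ T ↔ g x < g z := by simp [T]
  have hcross : ∀ z ∈ T, ∀ w ∉ T, 0 ≤ c z w * (g z - g w) := fun z hz w hw =>
    mul_nonneg (hc₀ z w) (by linarith [(hT z).1 hz, not_lt.1 ((hT w).not.1 hw)])
  rw [sum_sum_neighborFinset_eq_sum_sum_notMem G (fun z w => by rw [hc]; ring) T]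
  calc ∑ y ∈ G.neighborFinset x, (c y x * (g y - g x))⁺
      = ∑ y ∈ G.neighborFinset x with y ∈ T, c y x * (g y - g x) := by
        rw [sum_filter]
        refine sum_congr rfl fun y _ => ?_
        split_ifs with hy
        · exact posPart_eq_self.2 (mul_nonneg (hc₀ y x) (by linarith [(hT y).1 hy]))
        · exact posPart_eq_zero.2 (mul_nonpos_of_nonneg_of_nonpos (hc₀ y x)
            (by linarith [not_lt.1 ((hT y).not.1 hy)]))
    _ ≤ ∑ y ∈ G.neighborFinset x with y ∈ T, ∑ w ∈ G.neighborFinset y with w ∉ T,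
          c y w * (g y - g w) := by
        refine sum_le_sum fun y hy => ?_
        rw [mem_filter, mem_neighborFinset] at hy
        refine single_le_sum (f := fun w => c y w * (g y - g w))
          (fun w hw => hcross y hy.2 w (mem_filter.1 hw).2) ?_
        simp [hy.1.symm, hT]
    _ ≤ ∑ z ∈ T, ∑ w ∈ G.neighborFinset z with w ∉ T, c z w * (g z - g w) :=
        sum_le_sum_of_subset_of_nonneg (fun y hy => (mem_filter.1 hy).2)
          fun z hz _ => sum_nonneg fun w hw => hcross z hz w (mem_filter.1 hw).2

end SimpleGraph

namespace EuclideanSpace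

variable {ι : Type*} [Fintype ι]

theorem norm_le_sum_abs (v : EuclideanSpace ℝ ι) : ‖v‖ ≤ ∑ i, |v i| := by
  rw [EuclideanSpace.norm_eq]
  refine Real.sqrt_le_iff.2 ⟨sum_nonneg fun i _ => abs_nonneg _, ?_⟩
  simpa using sum_sq_le_sq_sum_of_nonneg (s := univ) fun i _ => abs_nonneg (v i)

theorem sum_abs_le_sqrt_card_mul_norm (v : EuclideanSpace ℝ ι) :
    ∑ i, |v i| ≤ √(Fintype.card ι) * ‖v‖ := by
  simpa [EuclideanSpace.norm_eq] using
    Real.sum_mul_le_sqrt_mul_sqrt univ (fun _ => 1) fun i => |v i|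

end EuclideanSpace

section

variable {V E : Type*} [NormedAddCommGroup E] [InnerProductSpace ℝ E]

noncomputable def unitDir (p : V → E) (z w : V) : E := ‖p z - p w‖⁻¹ • (p z - p w)

theorem inner_unitDir (u : E) (p : V → E) (z w : V) :
    ⟪u, unitDir p z w⟫ = ‖p z - p w‖⁻¹ * (⟪u, p z⟫ - ⟪u, p w⟫) := by
  rw [unitDir, real_inner_smul_right, inner_sub_right]

theorem norm_unitDir_le_one (p : V → E) (z w : V) : ‖unitDir p z w‖ ≤ 1 := by
  rcases eq_or_ne (p z - p w) 0 with h | h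
  · simp [unitDir, h]
  · exact (norm_smul_inv_norm h).le

theorem norm_unitDir {p : V → E} {z w : V} (h : p z ≠ p w) : ‖unitDir p z w‖ = 1 :=
  norm_smul_inv_norm (sub_ne_zero.2 h)

namespace SimpleGraph

variable [Fintype V] (G : SimpleGraph V) [DecidableRel G.Adj]

noncomputable def balanceVector (p : V → E) (z : V) : E :=
  ∑ w ∈ G.neighborFinset z, unitDir p z w

theorem norm_balanceVector_le_degree (p : V → E) (z : V) :
    ‖G.balanceVector p z‖ ≤ G.degree z :=
  calc ‖G.balanceVector p z‖ ≤ ∑ w ∈ G.neighborFinset z, ‖unitDir p z w‖ := norm_sum_le _ _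
    _ ≤ ∑ w ∈ G.neighborFinset z, 1 := sum_le_sum fun w _ => norm_unitDir_le_one p z w
    _ = G.degree z := by simp

theorem balanceVector_eq_zero_of_degree_eq_zero (p : V → E) {z : V} (hz : G.degree z = 0) :
    G.balanceVector p z = 0 := by
  have hempty : G.neighborFinset z = ∅ :=
    card_eq_zero.1 ((G.card_neighborFinset_eq_degree z).trans hz)
  simp [balanceVector, hempty]

theorem inner_balanceVector (u : E) (p : V → E) (z : V) :
    ⟪u, G.balanceVector p z⟫ =
      ∑ w ∈ G.neighborFinset z, ‖p z - p w‖⁻¹ * (⟪u, p z⟫ - ⟪u, p w⟫) := by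
  simp only [balanceVector, inner_sum, inner_unitDir]

variable {G} {p : V → E}

theorem sum_posPart_inner_unitDir_le (hbal : ∀ z, G.degree z ≠ 1 → G.balanceVector p z = 0)
    (u : E) (x : V) :
    ∑ y ∈ G.neighborFinset x, ⟪u, unitDir p y x⟫⁺ ≤
      ∑ l with G.degree l = 1, ⟪u, G.balanceVector p l⟫⁺ := by
  have key := G.sum_posPart_le_sum_filter_lt (fun z => ⟪u, p z⟫)
    (fun z w => by rw [norm_sub_rev]) (fun z w => inv_nonneg.2 (norm_nonneg (p z - p w))) x
  simp only [← inner_balanceVector] at key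
  simp only [inner_unitDir]
  refine key.trans (sum_le_sum_posPart_of_eq_zero (fun z hz => ?_) _)
  rw [hbal z (by simpa using hz), inner_zero_right]

theorem sum_abs_unitDir_apply_le {ι : Type*} [Fintype ι] {p : V → EuclideanSpace ℝ ι}
    (hbal : ∀ z, G.degree z ≠ 1 → G.balanceVector p z = 0) (x : V) (i : ι) :
    ∑ y ∈ G.neighborFinset x, |unitDir p y x i| ≤
      ∑ l with G.degree l = 1, |G.balanceVector p l i| := by
  classical
  have hpos := sum_posPart_inner_unitDir_le hbal (EuclideanSpace.single i (1 : ℝ)) x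
  have hneg := sum_posPart_inner_unitDir_le hbal (-EuclideanSpace.single i (1 : ℝ)) x
  simp only [inner_neg_left, EuclideanSpace.inner_single_left, map_one, one_mul, posPart_neg]
    at hpos hneg
  simp only [← posPart_add_negPart, sum_add_distrib]
  exact add_le_add hpos hneg

end SimpleGraph

end

theorem degree_le_sqrt_mul_card_leaves_general
    {k : ℕ} {V : Type*} [Fintype V]
    (G : SimpleGraph V) [DecidableRel G.Adj]
    (p : V → EuclideanSpace ℝ (Fin k)) (hinj : Function.Injective p)
    (hbal : ∀ x : V, 2 ≤ G.degree x →
      ∑ y ∈ G.neighborFinset x, (‖p x - p y‖)⁻¹ • (p x - p y) = 0)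
    (x : V) :
    (G.degree x : ℝ)
      ≤ Real.sqrt k * (Finset.univ.filter fun l : V => G.degree l = 1).card := by
  have hbal_leaves : ∀ z, G.degree z ≠ 1 → G.balanceVector p z = 0 := fun z hz => by
    rcases Nat.lt_or_ge (G.degree z) 2 with h | h
    · exact G.balanceVector_eq_zero_of_degree_eq_zero p (by omega)
    · exact hbal z h
  calc (G.degree x : ℝ) = ∑ y ∈ G.neighborFinset x, ‖unitDir p y x‖ := by
        rw [sum_congr rfl fun y hy => norm_unitDir (hinj.ne ((G.mem_neighborFinset x y).1 hy).ne')]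
        simp
    _ ≤ ∑ y ∈ G.neighborFinset x, ∑ i, |unitDir p y x i| :=
        sum_le_sum fun y _ => EuclideanSpace.norm_le_sum_abs _
    _ = ∑ i, ∑ y ∈ G.neighborFinset x, |unitDir p y x i| := sum_comm
    _ ≤ ∑ i, ∑ l with G.degree l = 1, |G.balanceVector p l i| :=
        sum_le_sum fun i _ => SimpleGraph.sum_abs_unitDir_apply_le hbal_leaves x i
    _ = ∑ l with G.degree l = 1, ∑ i, |G.balanceVector p l i| := sum_comm
    _ ≤ ∑ l with G.degree l = 1, √k * 1 := sum_le_sum fun l hl => by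
        refine (EuclideanSpace.sum_abs_le_sqrt_card_mul_norm _).trans ?_
        rw [Fintype.card_fin]
        gcongr
        simpa [(mem_filter.1 hl).2] using G.norm_balanceVector_le_degree p l
    _ = √k * (univ.filter fun l : V => G.degree l = 1).card := by
        rw [sum_const, nsmul_eq_mul, mul_one, mul_comm]

/-- In a finite critical net in `ℝ^k` satisfying the balance
condition, the degree of every vertex is at most `√k` times the number of leaves. -/
theorem degree_le_sqrt_mul_card_leaves
    {k : ℕ} (hk : 1 ≤ k) {V : Type*} [Fintype V] [DecidableEq V]
    (G : SimpleGraph V) [DecidableRel G.Adj]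
    (p : V → EuclideanSpace ℝ (Fin k)) (hinj : Function.Injective p)
    (hdeg1 : ∀ x : V, 1 ≤ G.degree x)
    (hnoLL : ∀ x y : V, G.Adj x y → ¬(G.degree x = 1 ∧ G.degree y = 1))
    (hbal : ∀ x : V, 2 ≤ G.degree x →
      ∑ y ∈ G.neighborFinset x, (‖p x - p y‖)⁻¹ • (p x - p y) = 0)
    (x : V) :
    (G.degree x : ℝ)
      ≤ Real.sqrt k * (Finset.univ.filter fun l : V => G.degree l = 1).card :=
  degree_le_sqrt_mul_card_leaves_general G p hinj hbal x
end
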